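/- arXiv:2506.06266 — 4 statements merged into one kernel-verified Lean document; each statement's English description precedes it below -/
import Mathlib

section
/- Linear attention fails on 2-repetitive MQAR with ε-JL keys when ε = ω(1/N): for any ε > 0 and unit keys k₁, k₂ with ⟨k₁, k₂⟩ = ε and orthonormal one-hot values v₁, v₂, there exists a stream of length N ≤ ⌈1/ε⌉ + 2 of pairs from {(k₁,v₁), (k₂,v₂)} such that the decoded output on query k₁ is v₂ rather than v₁. -/
open Matrix

/-!
Feed `(k₁, v₁)` once and then `(k₂, v₂)` `m` times. Queried with `k₁`, the state
`k₁ᵀv₁ + m k₂ᵀv₂` scores `v₁` with `⟨k₁,k₁⟩ = 1` and `v₂` with `m ⟨k₁,k₂⟩ = m ε`; the cross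
terms vanish since the values are orthonormal. So `v₂` wins as soon as `m > 1/ε`, and
`m = ⌈1/ε⌉ + 1` gives a stream of length `⌈1/ε⌉ + 2`.
-/

theorem dotProduct_vecMul_sum_vecMulVec {ι l n R : Type*} [CommSemiring R] [Fintype l]
    [Fintype n] (s : Finset ι) (w : n → R) (q : l → R) (k : ι → l → R) (v : ι → n → R) :
    w ⬝ᵥ q ᵥ* ∑ t ∈ s, vecMulVec (k t) (v t) = ∑ t ∈ s, (q ⬝ᵥ k t) * (w ⬝ᵥ v t) := by
  simp only [vecMul_sum, vecMul_vecMulVec, dotProduct_sum, dotProduct_smul, smul_eq_mul]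

theorem one_lt_ceil_inv_add_one_mul {ε : ℝ} (hε : 0 < ε) : 1 < ((⌈1 / ε⌉₊ + 1 : ℕ) : ℝ) * ε := by
  rw [← div_lt_iff₀ hε]
  push_cast
  linarith [Nat.le_ceil (1 / ε)]

theorem stmt_7_general (d : ℕ) (k₁ k₂ v₁ v₂ : Fin d → ℝ) (ε : ℝ)
    (hε0 : 0 < ε)
    (hk₁ : k₁ ⬝ᵥ k₁ = 1) (hk₁₂ : k₁ ⬝ᵥ k₂ = ε)
    (hv₁ : v₁ ⬝ᵥ v₁ = 1) (hv₂ : v₂ ⬝ᵥ v₂ = 1) (hv₁₂ : v₁ ⬝ᵥ v₂ = 0) :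
    ∃ N : ℕ, N ≤ ⌈1/ε⌉₊ + 2 ∧
      ∃ σ : Fin N → Fin 2,
        (∃ t : Fin N, σ t = 0) ∧
        (v₁ ⬝ᵥ Matrix.vecMul k₁
            (∑ t : Fin N, Matrix.vecMulVec (![k₁, k₂] (σ t)) (![v₁, v₂] (σ t))) <
         v₂ ⬝ᵥ Matrix.vecMul k₁
            (∑ t : Fin N, Matrix.vecMulVec (![k₁, k₂] (σ t)) (![v₁, v₂] (σ t)))) := by
  refine ⟨⌈1 / ε⌉₊ + 1 + 1, le_rfl, Fin.cons 0 fun _ => 1, ⟨0, rfl⟩, ?_⟩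
  rw [dotProduct_vecMul_sum_vecMulVec, dotProduct_vecMul_sum_vecMulVec]
  simp only [Fin.sum_univ_succ, Fin.cons_zero, Fin.cons_succ, Finset.sum_const,
    Finset.card_univ, Fintype.card_fin, nsmul_eq_mul, cons_val_zero, cons_val_one,
    dotProduct_comm v₂ v₁, hk₁, hk₁₂, hv₁, hv₂, hv₁₂]
  linarith [one_lt_ceil_inv_add_one_mul hε0]

/-- Linear attention fails on 2-repetitive MQAR with ε-JL keys: for any `ε ∈ (0,1)`,
unit keys `k₁, k₂` with `⟨k₁,k₂⟩ = ε` and orthonormal values `v₁, v₂`, there is a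
stream of length `N ≤ ⌈1/ε⌉ + 2` of pairs from `{(k₁,v₁),(k₂,v₂)}` containing
`(k₁,v₁)` such that argmax decoding on query `k₁` prefers `v₂` over `v₁`. -/
theorem stmt_7 (d : ℕ) (k₁ k₂ v₁ v₂ : Fin d → ℝ) (ε : ℝ)
    (hε0 : 0 < ε) (hε1 : ε < 1)
    (hk₁ : k₁ ⬝ᵥ k₁ = 1) (hk₂ : k₂ ⬝ᵥ k₂ = 1) (hk₁₂ : k₁ ⬝ᵥ k₂ = ε)
    (hv₁ : v₁ ⬝ᵥ v₁ = 1) (hv₂ : v₂ ⬝ᵥ v₂ = 1) (hv₁₂ : v₁ ⬝ᵥ v₂ = 0) :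
    ∃ N : ℕ, N ≤ ⌈1/ε⌉₊ + 2 ∧
      ∃ σ : Fin N → Fin 2,
        (∃ t : Fin N, σ t = 0) ∧
        (v₁ ⬝ᵥ Matrix.vecMul k₁
            (∑ t : Fin N, Matrix.vecMulVec (![k₁, k₂] (σ t)) (![v₁, v₂] (σ t))) <
         v₂ ⬝ᵥ Matrix.vecMul k₁
            (∑ t : Fin N, Matrix.vecMulVec (![k₁, k₂] (σ t)) (![v₁, v₂] (σ t)))) :=
  stmt_7_general d k₁ k₂ v₁ v₂ ε hε0 hk₁ hk₁₂ hv₁ hv₂ hv₁₂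
end

section
/- Suppose keys k₁,…,k_m ∈ ℝ^{1×d} satisfy the ε-JL property (unit norm, pairwise inner products bounded by ε in absolute value). Write the delta-rule state as W⁽ᵗ⁾ = Σ_{i,j} γ_{i,j}^{(t)} k_iᵀ v_j. If the input at step t+1 is (k_ℓ, v_ℓ), then γ_{i,j}^{(t+1)} = γ_{i,j}^{(t)} for i ≠ ℓ, and γ_{ℓ,j}^{(t+1)} = −Σ_{i' ≠ ℓ} ⟨k_ℓ, k_{i'}⟩ γ_{i',j}^{(t)} + 1[j = ℓ]. -/
open Matrix

/-- Coefficient update for the delta rule with ε-JL keys: if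
`W⁽ᵗ⁾ = Σᵢⱼ γᵢⱼ kᵢᵀ vⱼ` and the input at step `t+1` is `(k_ℓ, v_ℓ)`, then the
updated state expands with coefficients `γ'ᵢⱼ = γᵢⱼ` for `i ≠ ℓ` and
`γ'_{ℓ,j} = −Σ_{i'≠ℓ} ⟨k_ℓ, k_{i'}⟩ γ_{i',j} + 1[j = ℓ]`. -/
theorem stmt_8 (d m : ℕ) (k v : Fin m → Fin d → ℝ) (ε : ℝ) (hε : 0 ≤ ε)
    (hkk : ∀ i : Fin m, k i ⬝ᵥ k i = 1)
    (hkε : ∀ i j : Fin m, i ≠ j → |k i ⬝ᵥ k j| ≤ ε)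
    (hv : LinearIndependent ℝ v)
    (γ : Fin m → Fin m → ℝ) (ℓ : Fin m)
    (W W' : Matrix (Fin d) (Fin d) ℝ)
    (hW : W = ∑ i : Fin m, ∑ j : Fin m, γ i j • Matrix.vecMulVec (k i) (v j))
    (hW' : W' = W - Matrix.vecMulVec (k ℓ) (Matrix.vecMul (k ℓ) W)
               + Matrix.vecMulVec (k ℓ) (v ℓ)) :
    W' = ∑ i : Fin m, ∑ j : Fin m,
      (if i = ℓ then
          (∑ i' ∈ Finset.univ.erase ℓ, -((k ℓ ⬝ᵥ k i') * γ i' j))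
            + (if j = ℓ then (1 : ℝ) else 0)
        else γ i j) • Matrix.vecMulVec (k i) (v j) := by
  subst hW hW'
  ext a b
  simp only [Matrix.add_apply, Matrix.sub_apply, Matrix.sum_apply, Matrix.smul_apply,
    Matrix.vecMulVec_apply, Matrix.vecMul, dotProduct, smul_eq_mul]
  have hkk' : ∀ i : Fin m, ∑ x : Fin d, k i x * k i x = 1 := by
    intro i; simpa [dotProduct] using hkk i
  set S : Fin m → ℝ := fun i => ∑ x : Fin d, k ℓ x * k i x with hS
  have h1 : ∑ x : Fin d, k ℓ x * ∑ i : Fin m, ∑ j : Fin m, γ i j * (k i x * v j b)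
      = ∑ i : Fin m, ∑ j : Fin m, γ i j * (S i * v j b) := by
    simp only [hS, Finset.mul_sum, Finset.sum_mul]
    rw [Finset.sum_comm]
    refine Finset.sum_congr rfl fun i _ => ?_
    rw [Finset.sum_comm]
    refine Finset.sum_congr rfl fun j _ => ?_
    refine Finset.sum_congr rfl fun x _ => ?_
    ring
  rw [h1]
  have hC : ∀ i j : Fin m,
      ((if i = ℓ then
          (∑ i' ∈ Finset.univ.erase ℓ, -(S i' * γ i' j)) + (if j = ℓ then (1:ℝ) else 0)
        else γ i j)) * (k i a * v j b)
      = γ i j * (k i a * v j b)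
        + (if i = ℓ then (-(∑ i' : Fin m, γ i' j * (S i' * v j b)) + (if j = ℓ then (1:ℝ) else 0) * v j b) * k ℓ a else 0) := by
    intro i j
    by_cases h : i = ℓ
    · have hSl : S ℓ = 1 := hkk' ℓ
      simp only [h, eq_self_iff_true, if_true]
      rw [← Finset.sum_erase_add Finset.univ (fun i' => γ i' j * (S i' * v j b))
        (Finset.mem_univ ℓ), hSl]
      have hsum : -(∑ i' ∈ Finset.univ.erase ℓ, γ i' j * (S i' * v j b)) * k ℓ a
          = ∑ i' ∈ Finset.univ.erase ℓ, -(S i' * γ i' j) * (k ℓ a * v j b) := by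
        rw [neg_mul, Finset.sum_mul, ← Finset.sum_neg_distrib]
        exact Finset.sum_congr rfl fun x _ => by ring
      rw [add_mul, Finset.sum_mul]
      linear_combination -hsum
    · simp [h]
  rw [Finset.sum_congr rfl fun i _ => Finset.sum_congr rfl fun j _ => hC i j]
  have h4 : ∀ f : Fin m → ℝ,
      (∑ x : Fin m, ∑ x1 : Fin m, if x = ℓ then f x1 else 0) = ∑ x1 : Fin m, f x1 := by
    intro f; rw [Finset.sum_comm]; simp
  simp only [Finset.sum_add_distrib]
  rw [h4]
  have h2 : ∑ j : Fin m, (∑ i : Fin m, γ i j * (S i * v j b)) * k ℓ a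
      = k ℓ a * ∑ i : Fin m, ∑ j : Fin m, γ i j * (S i * v j b) := by
    simp only [Finset.sum_mul, Finset.mul_sum]
    rw [Finset.sum_comm]
    exact Finset.sum_congr rfl fun x _ => Finset.sum_congr rfl fun y _ => by ring
  have h3 : ∑ j : Fin m, (if j = ℓ then (1:ℝ) else 0) * v j b * k ℓ a = v ℓ b * k ℓ a := by
    simp [ite_mul]
  simp only [add_mul, neg_mul, Finset.sum_add_distrib, Finset.sum_neg_distrib]
  linear_combination h2 - h3
end

section
/- With ε-JL keys and the delta-rule update starting from W⁽⁰⁾ = 0, the coefficients satisfy γ_{i,j}^{(t)} = 1[(k_i, v_j) has occurred and is the 'current' diagonal entry, i.e., i = j and key i has appeared] + Δ_{i,j}^{(t)} with |Δ_{i,j}^{(t)}| ≤ Σ_{a=1}^{t} ((m−1)ε)^a for all t ≥ 0 and all i, j ∈ {1,…,m}. -/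
/-!
Let `K`, `V` be the matrices with rows `kᵢ`, `vⱼ`. Then `W⁽ᵗ⁾ = Kᵀ Γ⁽ᵗ⁾ V` for the coefficient
matrix `Γ⁽ᵗ⁾ = (γᵢⱼ⁽ᵗ⁾)`, and `Γ ↦ Kᵀ Γ V` is injective because the rows of `K` and of `V` are
linearly independent. A delta-rule step with key `ℓ` maps `Kᵀ Γ V` to
`Kᵀ (Γ - Eₗₗ (K Kᵀ) Γ + Eₗₗ) V`. So it changes only row `ℓ` of `Γ`, and since `⟨kₗ, kₗ⟩ = 1` the
new row is `eₗ - Σ_{q ≠ ℓ} ⟨kₗ, k_q⟩ Γ_q`. The off-diagonal Gram entries are at most `ε`, and every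
entry of `Γ⁽ᵗ⁾` is at most `1 + B_t` in absolute value, where `B_t = Σ_{a=1}^t ((m-1)ε)^a`. Hence
the new error is at most `(m-1)ε(1 + B_t) = B_{t+1}`, while the other rows keep their error.
-/

open Matrix

namespace Matrix

variable {ι κ l n p R : Type*} [Fintype ι] [Fintype κ]

theorem sum_sum_smul_vecMulVec [CommSemiring R] (A : Matrix ι n R) (B : Matrix κ p R)
    (C : Matrix ι κ R) :
    ∑ i, ∑ j, C i j • vecMulVec (A i) (B j) = Aᵀ * C * B := by
  ext a b
  simp only [sum_apply, smul_apply, vecMulVec_apply, mul_apply, transpose_apply, smul_eq_mul,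
    Finset.sum_mul]
  rw [Finset.sum_comm]
  exact Finset.sum_congr rfl fun j _ => Finset.sum_congr rfl fun i _ => by ring

theorem vecMulVec_eq_transpose_mul_single_mul [CommSemiring R] [DecidableEq ι] [DecidableEq κ]
    (A : Matrix ι n R) (B : Matrix κ p R) (i : ι) (j : κ) :
    vecMulVec (A i) (B j) = Aᵀ * single i j (1 : R) * B := by
  rw [← sum_sum_smul_vecMulVec]
  simp [single_apply, ite_and]

theorem mul_left_injective_of_vecMul_injective [NonUnitalNonAssocSemiring R] {M : Matrix ι n R}
    (hM : Function.Injective M.vecMul) : Function.Injective fun X : Matrix l ι R => X * M :=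
  fun _ _ h => funext fun i => hM (congrFun h i)

theorem transpose_mul_mul_injective [CommRing R] {A : Matrix ι n R} {B : Matrix κ p R}
    (hA : LinearIndependent R A.row) (hB : LinearIndependent R B.row) :
    Function.Injective fun C : Matrix ι κ R => Aᵀ * C * B := by
  intro C C' h
  have hA' := mul_left_injective_of_vecMul_injective (l := p) (vecMul_injective_iff.mpr hA)
  have hB' := mul_left_injective_of_vecMul_injective (l := ι) (vecMul_injective_iff.mpr hB)
  have hCB : (C * B)ᵀ * A = (C' * B)ᵀ * A := by
    simpa only [transpose_mul, transpose_transpose, Matrix.mul_assoc] using congrArg transpose h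
  exact hB' (transpose_injective (hA' hCB))

end Matrix

section DeltaRule

variable {ι n p R : Type*} [Fintype ι] [DecidableEq ι]

/-- The coefficient matrix after a delta-rule step with key `ℓ`, where `G` is the Gram matrix of
the keys. -/
def deltaRuleCoeff [Ring R] (G C : Matrix ι ι R) (ℓ : ι) : Matrix ι ι R :=
  C - single ℓ ℓ 1 * G * C + single ℓ ℓ 1

theorem coeff_eq_deltaRuleCoeff [Fintype n] [CommRing R] {K : Matrix ι n R} {V : Matrix ι p R}
    (hK : LinearIndependent R K.row) (hV : LinearIndependent R V.row) (ℓ : ι)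
    {W W' : Matrix n p R} {C C' : Matrix ι ι R} (hW : W = Kᵀ * C * V) (hW' : W' = Kᵀ * C' * V)
    (hstep : W' = W - vecMulVec (K ℓ) (K ℓ ᵥ* W) + vecMulVec (K ℓ) (V ℓ)) :
    C' = deltaRuleCoeff (K * Kᵀ) C ℓ := by
  apply transpose_mul_mul_injective hK hV
  have hKW : vecMulVec (K ℓ) (K ℓ ᵥ* W) = Kᵀ * single ℓ ℓ (1 : R) * (K * W) :=
    vecMulVec_eq_transpose_mul_single_mul K (K * W) ℓ ℓ
  dsimp only [deltaRuleCoeff]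
  rw [← hW', hstep, hKW, vecMulVec_eq_transpose_mul_single_mul, hW]
  simp only [Matrix.mul_add, Matrix.mul_sub, Matrix.add_mul, Matrix.sub_mul, Matrix.mul_assoc]

theorem deltaRuleCoeff_apply_of_ne [Ring R] {G C : Matrix ι ι R} {ℓ i : ι} (hi : i ≠ ℓ)
    (j : ι) : deltaRuleCoeff G C ℓ i j = C i j := by
  simp [deltaRuleCoeff, Matrix.mul_assoc, hi, hi.symm]

theorem deltaRuleCoeff_apply_self [Ring R] {G C : Matrix ι ι R} {ℓ : ι} (hG : G ℓ ℓ = 1)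
    (j : ι) : deltaRuleCoeff G C ℓ ℓ j
      = (if ℓ = j then 1 else 0) - ∑ q ∈ Finset.univ.erase ℓ, G ℓ q * C q j := by
  rw [deltaRuleCoeff, Matrix.add_apply, Matrix.sub_apply, Matrix.mul_assoc, single_mul_apply_same,
    one_mul, mul_apply, ← Finset.add_sum_erase _ _ (Finset.mem_univ ℓ), hG, one_mul, single_apply]
  simp only [true_and]
  abel

end DeltaRule

theorem abs_sum_erase_mul_le {ι : Type*} [Fintype ι] [DecidableEq ι] {G : Matrix ι ι ℝ}
    {c : ι → ℝ} {ε b : ℝ} (ℓ : ι) (hG : ∀ q ≠ ℓ, |G ℓ q| ≤ ε) (hc : ∀ q, |c q| ≤ b) :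
    |∑ q ∈ Finset.univ.erase ℓ, G ℓ q * c q| ≤ ((Fintype.card ι : ℝ) - 1) * (ε * b) := by
  calc |∑ q ∈ Finset.univ.erase ℓ, G ℓ q * c q|
      ≤ ∑ q ∈ Finset.univ.erase ℓ, |G ℓ q * c q| := Finset.abs_sum_le_sum_abs _ _
    _ ≤ ∑ q ∈ Finset.univ.erase ℓ, ε * b := by
      refine Finset.sum_le_sum fun q hq => ?_
      have hqℓ := Finset.ne_of_mem_erase hq
      rw [abs_mul]
      exact mul_le_mul (hG q hqℓ) (hc q) (abs_nonneg _) ((abs_nonneg _).trans (hG q hqℓ))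
    _ = ((Fintype.card ι : ℝ) - 1) * (ε * b) := by
      rw [Finset.sum_const, Finset.card_erase_of_mem (Finset.mem_univ ℓ), Finset.card_univ,
        nsmul_eq_mul, Nat.cast_pred (Fintype.card_pos_iff.mpr ⟨ℓ⟩)]

theorem abs_le_add_one_of_abs_sub_ite_le {P : Prop} [Decidable P] {a b : ℝ}
    (h : |a - if P then 1 else 0| ≤ b) : |a| ≤ b + 1 := by
  have hP : |(if P then (1 : ℝ) else 0)| ≤ 1 := by split_ifs <;> simp
  linarith [abs_sub_abs_le_abs_sub a (if P then 1 else 0)]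

theorem sum_Icc_one_pow_succ {R : Type*} [CommRing R] (x : R) (t : ℕ) :
    ∑ a ∈ Finset.Icc 1 (t + 1), x ^ a = x * (∑ a ∈ Finset.Icc 1 t, x ^ a + 1) := by
  induction t with
  | zero => simp
  | succ t ih =>
    linear_combination Finset.sum_Icc_succ_top (a := 1) (b := t + 1) (by omega) (x ^ ·) + ih
      - x * Finset.sum_Icc_succ_top (a := 1) (b := t) (by omega) (x ^ ·)

open Classical in
/-- Error bound for the delta-rule coefficients with ε-JL keys:
`γᵢⱼ⁽ᵗ⁾ = 1[i = j and key i has appeared] + Δᵢⱼ⁽ᵗ⁾` with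
`|Δᵢⱼ⁽ᵗ⁾| ≤ Σ_{a=1}^{t} ((m−1)ε)^a`. -/
theorem stmt_9 (d m : ℕ) (k v : Fin m → Fin d → ℝ) (ε : ℝ) (hε : 0 ≤ ε)
    (hkk : ∀ i : Fin m, k i ⬝ᵥ k i = 1)
    (hkε : ∀ i j : Fin m, i ≠ j → |k i ⬝ᵥ k j| ≤ ε)
    (hk : LinearIndependent ℝ k) (hv : LinearIndependent ℝ v)
    (σ : ℕ → Fin m) (W : ℕ → Matrix (Fin d) (Fin d) ℝ)
    (hW0 : W 0 = 0)
    (hWs : ∀ t : ℕ, W (t + 1) =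
      W t - Matrix.vecMulVec (k (σ t)) (Matrix.vecMul (k (σ t)) (W t))
          + Matrix.vecMulVec (k (σ t)) (v (σ t)))
    (γ : ℕ → Fin m → Fin m → ℝ)
    (hγ : ∀ t : ℕ, W t = ∑ i : Fin m, ∑ j : Fin m,
      γ t i j • Matrix.vecMulVec (k i) (v j)) :
    ∀ (t : ℕ) (i j : Fin m),
      |γ t i j - (if i = j ∧ (∃ s < t, σ s = i) then (1 : ℝ) else 0)|
        ≤ ∑ a ∈ Finset.Icc 1 t, (((m : ℝ) - 1) * ε) ^ a := by
  set K : Matrix (Fin m) (Fin d) ℝ := of k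
  have hW : ∀ t, W t = Kᵀ * of (γ t) * of v := fun t => by
    rw [hγ t, ← sum_sum_smul_vecMulVec]; rfl
  have hγ0 : of (γ 0) = 0 := transpose_mul_mul_injective (A := K) (B := of v) hk hv <| by
    dsimp only
    rw [← hW 0, hW0, Matrix.mul_zero, Matrix.zero_mul]
  have hγs : ∀ t, of (γ (t + 1)) = deltaRuleCoeff (K * Kᵀ) (of (γ t)) (σ t) := fun t =>
    coeff_eq_deltaRuleCoeff (K := K) (V := of v) hk hv (σ t) (hW t) (hW (t + 1)) (hWs t)
  intro t
  induction t with
  | zero => simpa using congrFun₂ hγ0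
  | succ t ih =>
    intro i j
    have hγij := congrFun₂ (hγs t) i j
    rw [of_apply] at hγij
    simp only [Nat.exists_lt_succ_right]
    rcases eq_or_ne i (σ t) with rfl | hi
    · rw [hγij, deltaRuleCoeff_apply_self (G := K * Kᵀ) (hkk (σ t)), sum_Icc_one_pow_succ]
      simp only [or_true, and_true, of_apply, sub_sub_cancel_left, abs_neg]
      calc _ ≤ _ := abs_sum_erase_mul_le (σ t) (fun q hq => hkε _ _ hq.symm)
            fun q => abs_le_add_one_of_abs_sub_ite_le (ih q j)
        _ = _ := by rw [Fintype.card_fin]; ring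
    · have hx : 0 ≤ ((m : ℝ) - 1) * ε :=
        mul_nonneg (sub_nonneg.mpr (Nat.one_le_cast.mpr i.pos)) hε
      rw [hγij, deltaRuleCoeff_apply_of_ne hi, of_apply]
      simp only [Ne.symm hi, or_false]
      exact (ih i j).trans (Finset.sum_le_sum_of_subset_of_nonneg
        (Finset.Icc_subset_Icc_right t.le_succ) fun a _ _ => pow_nonneg hx a)
end

section
/- For the delta-rule update with orthonormal keys, the final state depends only on the set of keys seen (not their order or multiplicities), provided each key i is always paired with the same value v_i: streams with the same support set of indices yield the same final state W = Σ_{i ∈ support} k_iᵀ v_i. -/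
/-!
With orthonormal keys, the state after a prefix of the stream is the associative memory
`∑_{i ∈ S} kᵢᵀ vᵢ` over the set `S` of indices seen so far. Reading it with a key `kⱼ` returns
`vⱼ` if `j ∈ S` and `0` otherwise, so the delta update with index `j` removes whatever was stored
under `kⱼ` and writes `kⱼᵀ vⱼ` back: the memory of `S` becomes the memory of `insert j S`.
-/

open Matrix

namespace DeltaRule

variable {ι n p R : Type*} [Fintype n] [CommRing R] [DecidableEq ι]

def update (k : ι → n → R) (v : ι → p → R) (W : Matrix n p R) (j : ι) : Matrix n p R :=
  W - vecMulVec (k j) (k j ᵥ* W) + vecMulVec (k j) (v j)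

def memory (k : ι → n → R) (v : ι → p → R) (s : Finset ι) : Matrix n p R :=
  ∑ i ∈ s, vecMulVec (k i) (v i)

variable {k : ι → n → R} (v : ι → p → R)

theorem vecMul_memory (hk : ∀ i j, k i ⬝ᵥ k j = if i = j then 1 else 0) (s : Finset ι) (j : ι) :
    k j ᵥ* memory k v s = if j ∈ s then v j else 0 := by
  simp only [memory, vecMul_sum, vecMul_vecMulVec, hk, ite_smul, one_smul, zero_smul]
  exact Finset.sum_ite_eq s j v

theorem update_memory (hk : ∀ i j, k i ⬝ᵥ k j = if i = j then 1 else 0) (s : Finset ι) (j : ι) :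
    update k v (memory k v s) j = memory k v (insert j s) := by
  rw [update, vecMul_memory v hk]
  by_cases hj : j ∈ s
  · rw [if_pos hj, Finset.insert_eq_of_mem hj, sub_add_cancel]
  · -- Mathlib's `vecMulVec_zero` only covers square matrices.
    have : vecMulVec (k j) (0 : p → R) = 0 := ext fun _ _ => mul_zero _
    rw [if_neg hj, this, sub_zero, memory, memory, Finset.sum_insert hj, add_comm]

theorem eq_memory_image_range (hk : ∀ i j, k i ⬝ᵥ k j = if i = j then 1 else 0)
    {σ : ℕ → ι} {W : ℕ → Matrix n p R} (hW0 : W 0 = 0)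
    (hWs : ∀ t, W (t + 1) = update k v (W t) (σ t)) (N : ℕ) :
    W N = memory k v ((Finset.range N).image σ) := by
  induction N with
  | zero => simp [hW0, memory]
  | succ N ih =>
    rw [hWs, ih, update_memory v hk, Finset.range_add_one, Finset.image_insert]

end DeltaRule

open Classical in
/-- The delta-rule final state with orthonormal keys depends only on the support of the
stream: it equals `Σ_{i ∈ support} kᵢᵀ vᵢ`, and streams with equal support give equal
final states. -/
theorem stmt_14 (d m : ℕ) (k v : Fin m → Fin d → ℝ)
    (hk : ∀ i j : Fin m, k i ⬝ᵥ k j = if i = j then (1 : ℝ) else 0)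
    (N N' : ℕ) (σ σ' : ℕ → Fin m)
    (W W' : ℕ → Matrix (Fin d) (Fin d) ℝ)
    (hW0 : W 0 = 0) (hW'0 : W' 0 = 0)
    (hWs : ∀ t : ℕ, W (t + 1) =
      W t - Matrix.vecMulVec (k (σ t)) (Matrix.vecMul (k (σ t)) (W t))
          + Matrix.vecMulVec (k (σ t)) (v (σ t)))
    (hW's : ∀ t : ℕ, W' (t + 1) =
      W' t - Matrix.vecMulVec (k (σ' t)) (Matrix.vecMul (k (σ' t)) (W' t))
           + Matrix.vecMulVec (k (σ' t)) (v (σ' t)))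
    (hsupp : ∀ i : Fin m, (∃ t < N, σ t = i) ↔ (∃ t < N', σ' t = i)) :
    W N = (∑ i ∈ Finset.univ.filter (fun i : Fin m => ∃ t < N, σ t = i),
            Matrix.vecMulVec (k i) (v i)) ∧
    W N = W' N' := by
  have support_eq {N : ℕ} {σ : ℕ → Fin m} :
      (Finset.range N).image σ = Finset.univ.filter (fun i => ∃ t < N, σ t = i) := by
    ext i
    simp
  have hWN := DeltaRule.eq_memory_image_range v hk hW0 hWs N
  have hW'N' := DeltaRule.eq_memory_image_range v hk hW'0 hW's N'
  refine ⟨hWN.trans (congrArg _ support_eq), ?_⟩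
  rw [hWN, hW'N', support_eq, support_eq]
  simp only [hsupp]
end
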